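/- Let G be a finite simple graph, k ≥ 1, and X ⊆ V(G) a (k−1)-inseparable set with 2·|X| > 3·(k−1). Then 𝒯^k(X) := {(Y,S,Z) : (Y,S,Z) is a separation of G of order < k with X ⊆ S ∪ Z} is a G-tangle of order k. -/

import Mathlib

variable {V : Type*} {W : Type*}

/-- A separation (Y,S,Z) of a graph: pairwise disjoint sets covering the vertex set,
with no edge between Y and Z. -/
def IsSeparation (G : SimpleGraph V) (Y S Z : Set V) : Prop :=
  Disjoint Y S ∧ Disjoint Y Z ∧ Disjoint S Z ∧ Y ∪ S ∪ Z = Set.univ ∧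
    ∀ y ∈ Y, ∀ z ∈ Z, ¬ G.Adj y z

/-- `G` is `k`-connected: more than `k` vertices and no proper separation of order `< k`. -/
def KConnected (k : ℕ) (G : SimpleGraph V) : Prop :=
  k < Nat.card V ∧
    ∀ Y S Z : Set V, IsSeparation G Y S Z → Y.Nonempty → Z.Nonempty → k ≤ S.ncard

/-- `G` is quasi-4-connected. -/
def Quasi4Connected (G : SimpleGraph V) : Prop :=
  KConnected 3 G ∧
    ∀ Y S Z : Set V, IsSeparation G Y S Z → S.ncard = 3 → Y.ncard ≤ 1 ∨ Z.ncard ≤ 1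

/-- `T` is a `G`-tangle of order `k`. -/
def IsTangle (G : SimpleGraph V) (k : ℕ) (T : Set (Set V × Set V × Set V)) : Prop :=
  (∀ p ∈ T, IsSeparation G p.1 p.2.1 p.2.2 ∧ p.2.1.ncard < k) ∧
  (∀ Y S Z : Set V, IsSeparation G Y S Z → S.ncard < k →
    (Y, S, Z) ∈ T ∨ (Z, S, Y) ∈ T) ∧
  (∀ p₁ ∈ T, ∀ p₂ ∈ T, ∀ p₃ ∈ T,
    (p₁.2.2 ∩ p₂.2.2 ∩ p₃.2.2 : Set V).Nonempty ∨
      ∃ u v : V, G.Adj u v ∧ (u ∈ p₁.2.2 ∨ v ∈ p₁.2.2) ∧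
        (u ∈ p₂.2.2 ∨ v ∈ p₂.2.2) ∧ (u ∈ p₃.2.2 ∨ v ∈ p₃.2.2)) ∧
  (∀ p ∈ T, (p.2.2 : Set V).Nonempty)

/-- The order `⪯` on separations: (Y,S,Z) ⪯ (Y',S',Z') iff S ∪ Z ⊊ S' ∪ Z', or
S ∪ Z = S' ∪ Z' and S ⊆ S'. -/
def SepLE (p q : Set V × Set V × Set V) : Prop :=
  p.2.1 ∪ p.2.2 ⊂ q.2.1 ∪ q.2.2 ∨
    (p.2.1 ∪ p.2.2 = q.2.1 ∪ q.2.2 ∧ p.2.1 ⊆ q.2.1)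

/-- `p` is a `⪯`-minimal element of `T`. -/
def IsMinimalIn (T : Set (Set V × Set V × Set V)) (p : Set V × Set V × Set V) : Prop :=
  p ∈ T ∧ ∀ q ∈ T, SepLE q p → q = p

/-- Two separations are orthogonal. (They cross if they are not orthogonal.) -/
def SepOrthogonal (p q : Set V × Set V × Set V) : Prop :=
  (p.1 ∪ p.2.1) ∩ (q.1 ∪ q.2.1) ⊆ p.2.1 ∩ q.2.1

/-- A separation (Y,S,Z) is degenerate: |Y| = 1 and S is an independent set. -/
def Degenerate (G : SimpleGraph V) (Y S Z : Set V) : Prop :=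
  Y.ncard = 1 ∧ ∀ u ∈ S, ∀ v ∈ S, ¬ G.Adj u v

/-- The neighbourhood N(X): vertices outside X adjacent to a vertex of X. -/
def Nbhd (G : SimpleGraph V) (X : Set V) : Set V :=
  {v | v ∉ X ∧ ∃ u ∈ X, G.Adj u v}

/-- `C` is (the vertex set of) a connected component of `G − X`. -/
def IsCompOutside (G : SimpleGraph V) (X C : Set V) : Prop :=
  C ⊆ Xᶜ ∧ (G.induce C).Connected ∧ ∀ u ∈ C, ∀ v : V, v ∉ X → G.Adj u v → v ∈ C

/-- The torso `G⟦X⟧` of `X` in `G`. -/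
def torso (G : SimpleGraph V) (X : Set V) : SimpleGraph X where
  Adj u v := u ≠ v ∧ (G.Adj (u : V) (v : V) ∨
    ∃ C : Set V, IsCompOutside G X C ∧ (u : V) ∈ Nbhd G C ∧ (v : V) ∈ Nbhd G C)
  symm := by
    constructor
    rintro u v ⟨hne, h | ⟨C, hC, hu, hv⟩⟩
    · exact ⟨hne.symm, Or.inl h.symm⟩
    · exact ⟨hne.symm, Or.inr ⟨C, hC, hv, hu⟩⟩
  loopless := by
    constructor
    intro u h
    exact h.1 rfl

/-- `H` is a minor of `G`. -/
def IsMinor (H : SimpleGraph W) (G : SimpleGraph V) : Prop :=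
  ∃ M : W → Set V,
    (∀ w : W, (G.induce (M w)).Connected) ∧
    (Pairwise fun w w' : W => Disjoint (M w) (M w')) ∧
    ∀ w w' : W, H.Adj w w' → ∃ u ∈ M w, ∃ v ∈ M w', G.Adj u v

/-- `M` is a faithful model of the graph `H` (with vertex set `X ⊆ V(G)`) in `G`. -/
def FaithfulModel (G : SimpleGraph V) (X : Set V) (H : SimpleGraph X)
    (M : X → Set V) : Prop :=
  (∀ w : X, (w : V) ∈ M w) ∧
  (∀ w : X, (G.induce (M w)).Connected) ∧
  (Pairwise fun w w' : X => Disjoint (M w) (M w')) ∧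
  ∀ w w' : X, H.Adj w w' → ∃ u ∈ M w, ∃ v ∈ M w', G.Adj u v

/-- `H` (a graph with vertex set `X ⊆ V(G)`) is a faithful minor of `G`. -/
def IsFaithfulMinor (G : SimpleGraph V) (X : Set V) (H : SimpleGraph X) : Prop :=
  ∃ M : X → Set V, FaithfulModel G X H M

/-- The projection of a separation of `G` to a minor with model `M`. -/
def projSep {X : Set V} (M : X → Set V) (p : Set V × Set V × Set V) :
    Set X × Set X × Set X :=
  ({w : X | M w ⊆ p.1}, {w : X | (M w ∩ p.2.1).Nonempty}, {w : X | M w ⊆ p.2.2})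

/-- The graph TH₊₃: vertices 0,1,2,3 are v₁,v₂,v₃,v₄ (pairwise adjacent); 4,5,6 are
w₁,w₂,w₃ with w₁ ~ v₁,v₂,v₃, w₂ ~ v₁,v₂,v₄, w₃ ~ v₁,v₃,v₄. -/
def TH3 : SimpleGraph (Fin 7) :=
  SimpleGraph.fromRel (fun u v =>
    (u.val < 4 ∧ v.val < 4) ∨
    (u.val = 4 ∧ (v.val = 0 ∨ v.val = 1 ∨ v.val = 2)) ∨
    (u.val = 5 ∧ (v.val = 0 ∨ v.val = 1 ∨ v.val = 3)) ∨
    (u.val = 6 ∧ (v.val = 0 ∨ v.val = 2 ∨ v.val = 3)))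

/-- The graph TR₊₃: vertices 0,1,2 are v₁,v₂,v₃ (pairwise adjacent); 3,4,5 are
w₁,w₂,w₃, each adjacent to each of v₁,v₂,v₃. -/
def TR3 : SimpleGraph (Fin 6) :=
  SimpleGraph.fromRel (fun u v =>
    (u.val < 3 ∧ v.val < 3) ∨ (3 ≤ u.val ∧ v.val < 3))

/-- A graph is exceptional if it embeds (injectively, preserving adjacency)
into TH₊₃ or into TR₊₃. -/
def Exceptional (H : SimpleGraph W) : Prop :=
  (∃ f : W → Fin 7, Function.Injective f ∧ ∀ u v : W, H.Adj u v → TH3.Adj (f u) (f v)) ∨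
  (∃ f : W → Fin 6, Function.Injective f ∧ ∀ u v : W, H.Adj u v → TR3.Adj (f u) (f v))

/-- `X` is a `k`-inseparable set of `G`. -/
def KInseparable (G : SimpleGraph V) (k : ℕ) (X : Set V) : Prop :=
  k < X.ncard ∧
    ¬ ∃ Y S Z : Set V, IsSeparation G Y S Z ∧ S.ncard ≤ k ∧
      (X ∩ Y).Nonempty ∧ (X ∩ Z).Nonempty

/-- A triconnected region: a maximal 2-inseparable set of size ≥ 4. -/
def TriconnectedRegion (G : SimpleGraph V) (R : Set V) : Prop :=
  KInseparable G 2 R ∧ 4 ≤ R.ncard ∧ ∀ R' : Set V, R ⊂ R' → ¬ KInseparable G 2 R'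

/-- `H` is a topological subgraph of `G`. -/
def IsTopologicalSubgraph (H : SimpleGraph W) (G : SimpleGraph V) : Prop :=
  ∃ (φ : W → V) (P : ∀ u v : W, H.Adj u v → G.Walk (φ u) (φ v)),
    Function.Injective φ ∧
    (∀ u v (h : H.Adj u v), (P u v h).IsPath) ∧
    (∀ u v (h : H.Adj u v), P u v h = (P v u h.symm).reverse) ∧
    (∀ u v (h : H.Adj u v), ∀ x ∈ (P u v h).support,
      x ∈ Set.range φ → x = φ u ∨ x = φ v) ∧
    (∀ u v (h : H.Adj u v), ∀ u' v' (h' : H.Adj u' v'), s(u, v) ≠ s(u', v') →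
      ∀ x ∈ (P u v h).support, x ∈ (P u' v' h').support →
        (x = φ u ∨ x = φ v) ∧ (x = φ u' ∨ x = φ v'))

/-- A quasi-4-connected region of a 3-connected graph. -/
def Quasi4Region (G : SimpleGraph V) (R : Set V) : Prop :=
  IsFaithfulMinor G R (torso G R) ∧ Quasi4Connected (torso G R) ∧
    ∀ C : Set V, IsCompOutside G R C → (Nbhd G C).ncard = 3

/-- A split vertex of a separation (Y₀,S₀,Z₀). -/
def SplitVertex (G : SimpleGraph V) (S₀ Z₀ : Set V) (z : V) : Prop :=
  z ∈ Z₀ ∧ ∀ C : Set V, IsCompOutside G (S₀ ∪ {z}) C → (Nbhd G C).ncard = 3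

/-- The graph obtained from `G` by contracting the edge `s₁s₂` onto `s₁`. -/
def contractEdge (G : SimpleGraph V) (s₁ s₂ : V) : SimpleGraph ({s₂}ᶜ : Set V) where
  Adj u v := u ≠ v ∧ (G.Adj (u : V) (v : V) ∨
    ((u : V) = s₁ ∧ G.Adj (v : V) s₂) ∨ ((v : V) = s₁ ∧ G.Adj (u : V) s₂))
  symm := by
    constructor
    rintro u v ⟨hne, h | h | h⟩
    · exact ⟨hne.symm, Or.inl h.symm⟩
    · exact ⟨hne.symm, Or.inr (Or.inr h)⟩
    · exact ⟨hne.symm, Or.inr (Or.inl h)⟩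
  loopless := by
    constructor
    intro u h
    exact h.1 rfl

/-- `s t` are the endvertices of a crossedge of two crossing non-degenerate minimal
separations of the tangle `T`, with `s ∈ S₁` and `t ∈ S₂`. -/
def IsNondegCrossedge (G : SimpleGraph V) (T : Set (Set V × Set V × Set V))
    (s t : V) : Prop :=
  ∃ p q : Set V × Set V × Set V,
    IsMinimalIn T p ∧ IsMinimalIn T q ∧
    ¬ Degenerate G p.1 p.2.1 p.2.2 ∧ ¬ Degenerate G q.1 q.2.1 q.2.2 ∧
    ¬ SepOrthogonal p q ∧ G.Adj s t ∧ p.2.1 ∩ q.1 = {s} ∧ q.2.1 ∩ p.1 = {t}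

/-! Every vertex of `X` lies in two of the three separators of a counterexample to (T2): a vertex
lying in only one separator `S` has, by `(k-1)`-inseparability, a neighbour on the far side of `S`,
and together they form an edge meeting all three far sides. Counting then gives
`2|X| ≤ |S₁| + |S₂| + |S₃| ≤ 3(k-1)`. -/

theorem two_mul_ncard_le_of_mem_two {α : Type*} {X A B C : Set α} (hA : A.Finite)
    (hB : B.Finite) (hC : C.Finite)
    (h : ∀ x ∈ X, x ∈ A ∧ x ∈ B ∨ x ∈ A ∧ x ∈ C ∨ x ∈ B ∧ x ∈ C) :
    2 * X.ncard ≤ A.ncard + B.ncard + C.ncard := by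
  have hXAB : X ⊆ A ∪ B := fun x hx => by
    have := h x hx
    simp only [Set.mem_union]
    tauto
  have hXABC : X ⊆ A ∩ B ∪ C := fun x hx => by
    have := h x hx
    simp only [Set.mem_union, Set.mem_inter_iff]
    tauto
  have h₁ := Set.ncard_le_ncard hXAB (hA.union hB)
  have h₂ := Set.ncard_le_ncard hXABC ((hA.inter_of_left B).union hC)
  have h₃ := Set.ncard_union_add_ncard_inter A B hA hB
  have h₄ := Set.ncard_union_le (A ∩ B) C
  omega

section Separations

variable {G : SimpleGraph V} {X Y S Z : Set V} {m : ℕ}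

theorem IsSeparation.symm (h : IsSeparation G Y S Z) : IsSeparation G Z S Y := by
  obtain ⟨hYS, hYZ, hSZ, hcover, hnadj⟩ := h
  refine ⟨hSZ.symm, hYZ.symm, hYS.symm, ?_, fun z hz y hy hzy => hnadj y hy z hz hzy.symm⟩
  rw [← hcover]
  ext v
  simp only [Set.mem_union]
  tauto

theorem IsSeparation.mem_or (h : IsSeparation G Y S Z) (v : V) : v ∈ Y ∨ v ∈ S ∨ v ∈ Z := by
  have hv : v ∈ Y ∪ S ∪ Z := h.2.2.2.1 ▸ Set.mem_univ v
  simpa only [Set.mem_union, or_assoc] using hv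

theorem IsSeparation.subset_union_of_disjoint (h : IsSeparation G Y S Z) (hXY : Disjoint X Y) :
    X ⊆ S ∪ Z := fun x hx =>
  (h.mem_or x).resolve_left (Set.disjoint_left.mp hXY hx)

theorem IsSeparation.insert_diff_singleton (h : IsSeparation G Y S Z) {x : V} (hxS : x ∈ S)
    (hxZ : ∀ z ∈ Z, ¬ G.Adj x z) : IsSeparation G (insert x Y) (S \ {x}) Z := by
  have hcover := h.mem_or
  obtain ⟨hYS, hYZ, hSZ, -, hnadj⟩ := h
  have hxZ' : x ∉ Z := Set.disjoint_left.mp hSZ hxS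
  refine ⟨?_, ?_, hSZ.mono_left Set.sdiff_subset, ?_, ?_⟩
  · rw [Set.disjoint_insert_left]
    exact ⟨fun hx => hx.2 rfl, hYS.mono_right Set.sdiff_subset⟩
  · exact Set.disjoint_insert_left.mpr ⟨hxZ', hYZ⟩
  · ext v
    have := hcover v
    simp only [Set.mem_union, Set.mem_insert_iff, Set.mem_sdiff, Set.mem_singleton_iff,
      Set.mem_univ, iff_true]
    by_cases hvx : v = x <;> tauto
  · rintro y (rfl | hy) z hz
    exacts [hxZ z hz, hnadj y hy z hz]

variable [Finite V]

theorem KInseparable.inter_nonempty_of_subset_union (hX : KInseparable G m X)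
    (hS : S.ncard ≤ m) (hXSZ : X ⊆ S ∪ Z) : (X ∩ Z).Nonempty := by
  by_contra hXZ
  have hXS : X ⊆ S := fun x hx => (hXSZ hx).resolve_right fun hxZ => hXZ ⟨x, hx, hxZ⟩
  have := Set.ncard_le_ncard hXS S.toFinite
  have := hX.1
  omega

/-- Otherwise moving `x` from `S` to `Y` would separate `x` from `X ∩ Z`. -/
theorem KInseparable.exists_adj_of_mem_separator (hX : KInseparable G m X)
    (hsep : IsSeparation G Y S Z) (hS : S.ncard ≤ m) (hXSZ : X ⊆ S ∪ Z) {x : V} (hxX : x ∈ X)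
    (hxS : x ∈ S) : ∃ z ∈ Z, G.Adj x z := by
  by_contra! hxZ
  have hS' : (S \ {x}).ncard ≤ m := (Set.ncard_le_ncard Set.sdiff_subset S.toFinite).trans hS
  exact hX.2 ⟨insert x Y, S \ {x}, Z, hsep.insert_diff_singleton hxS hxZ, hS',
    ⟨x, hxX, Set.mem_insert x Y⟩, hX.inter_nonempty_of_subset_union hS hXSZ⟩

end Separations

section Tangle

variable {G : SimpleGraph V} {k : ℕ} {X : Set V}

/-- The set `𝒯ᵏ(X)` of the paper. -/
def tangleOf (G : SimpleGraph V) (k : ℕ) (X : Set V) : Set (Set V × Set V × Set V) :=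
  {p | IsSeparation G p.1 p.2.1 p.2.2 ∧ p.2.1.ncard < k ∧ X ⊆ p.2.1 ∪ p.2.2}

theorem mem_tangleOf_or_swap_mem (hX : KInseparable G (k - 1) X) {Y S Z : Set V}
    (hsep : IsSeparation G Y S Z) (hS : S.ncard < k) :
    (Y, S, Z) ∈ tangleOf G k X ∨ (Z, S, Y) ∈ tangleOf G k X := by
  by_cases hXY : Disjoint X Y
  · exact Or.inl ⟨hsep, hS, hsep.subset_union_of_disjoint hXY⟩
  by_cases hXZ : Disjoint X Z
  · exact Or.inr ⟨hsep.symm, hS, hsep.symm.subset_union_of_disjoint hXZ⟩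
  rw [Set.not_disjoint_iff_nonempty_inter] at hXY hXZ
  exact absurd ⟨Y, S, Z, hsep, by omega, hXY, hXZ⟩ hX.2

variable [Finite V]

theorem nonempty_of_mem_tangleOf (hX : KInseparable G (k - 1) X) {p : Set V × Set V × Set V}
    (hp : p ∈ tangleOf G k X) : p.2.2.Nonempty :=
  (hX.inter_nonempty_of_subset_union (by have := hp.2.1; omega) hp.2.2).mono
    Set.inter_subset_right

theorem exists_adj_of_mem_tangleOf (hX : KInseparable G (k - 1) X)
    {p : Set V × Set V × Set V} (hp : p ∈ tangleOf G k X) {x : V} (hxX : x ∈ X)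
    (hxS : x ∈ p.2.1) : ∃ z ∈ p.2.2, G.Adj x z :=
  hX.exists_adj_of_mem_separator hp.1 (by have := hp.2.1; omega) hp.2.2 hxX hxS

theorem mem_two_separators_of_not_cover (hX : KInseparable G (k - 1) X)
    {p₁ p₂ p₃ : Set V × Set V × Set V} (h₁ : p₁ ∈ tangleOf G k X) (h₂ : p₂ ∈ tangleOf G k X)
    (h₃ : p₃ ∈ tangleOf G k X) (hZ : ¬ (p₁.2.2 ∩ p₂.2.2 ∩ p₃.2.2).Nonempty)
    (hedge : ¬ ∃ u v : V, G.Adj u v ∧ (u ∈ p₁.2.2 ∨ v ∈ p₁.2.2) ∧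
      (u ∈ p₂.2.2 ∨ v ∈ p₂.2.2) ∧ (u ∈ p₃.2.2 ∨ v ∈ p₃.2.2))
    {x : V} (hx : x ∈ X) :
    x ∈ p₁.2.1 ∧ x ∈ p₂.2.1 ∨ x ∈ p₁.2.1 ∧ x ∈ p₃.2.1 ∨ x ∈ p₂.2.1 ∧ x ∈ p₃.2.1 := by
  have hx₁ : x ∈ p₁.2.1 → x ∈ p₂.2.2 → x ∉ p₃.2.2 := fun hS h₂ h₃ => by
    obtain ⟨z, hz, hxz⟩ := exists_adj_of_mem_tangleOf hX h₁ hx hS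
    exact hedge ⟨x, z, hxz, Or.inr hz, Or.inl h₂, Or.inl h₃⟩
  have hx₂ : x ∈ p₂.2.1 → x ∈ p₁.2.2 → x ∉ p₃.2.2 := fun hS h₁ h₃ => by
    obtain ⟨z, hz, hxz⟩ := exists_adj_of_mem_tangleOf hX h₂ hx hS
    exact hedge ⟨x, z, hxz, Or.inl h₁, Or.inr hz, Or.inl h₃⟩
  have hx₃ : x ∈ p₃.2.1 → x ∈ p₁.2.2 → x ∉ p₂.2.2 := fun hS h₁ h₂ => by
    obtain ⟨z, hz, hxz⟩ := exists_adj_of_mem_tangleOf hX h₃ hx hS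
    exact hedge ⟨x, z, hxz, Or.inl h₁, Or.inl h₂, Or.inr hz⟩
  have hx₀ : ¬ (x ∈ p₁.2.2 ∧ x ∈ p₂.2.2 ∧ x ∈ p₃.2.2) := fun ⟨h₁, h₂, h₃⟩ =>
    hZ ⟨x, ⟨h₁, h₂⟩, h₃⟩
  have := h₁.2.2 hx
  have := h₂.2.2 hx
  have := h₃.2.2 hx
  simp only [Set.mem_union] at *
  tauto

theorem tangleOf_triple_condition (hX : KInseparable G (k - 1) X) (hcard : 3 * (k - 1) < 2 * X.ncard)
    {p₁ p₂ p₃ : Set V × Set V × Set V} (h₁ : p₁ ∈ tangleOf G k X) (h₂ : p₂ ∈ tangleOf G k X)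
    (h₃ : p₃ ∈ tangleOf G k X) :
    (p₁.2.2 ∩ p₂.2.2 ∩ p₃.2.2).Nonempty ∨ ∃ u v : V, G.Adj u v ∧ (u ∈ p₁.2.2 ∨ v ∈ p₁.2.2) ∧
      (u ∈ p₂.2.2 ∨ v ∈ p₂.2.2) ∧ (u ∈ p₃.2.2 ∨ v ∈ p₃.2.2) := by
  by_contra hcon
  rw [not_or] at hcon
  have hcount := two_mul_ncard_le_of_mem_two p₁.2.1.toFinite p₂.2.1.toFinite p₃.2.1.toFinite
    fun x hx => mem_two_separators_of_not_cover hX h₁ h₂ h₃ hcon.1 hcon.2 hx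
  have := h₁.2.1
  have := h₂.2.1
  have := h₃.2.1
  omega

end Tangle

theorem statement4_general {V : Type*} [Fintype V] (G : SimpleGraph V) (k : ℕ)
    (X : Set V) (hins : KInseparable G (k - 1) X)
    (hcard : 3 * (k - 1) < 2 * X.ncard) :
    IsTangle G k {p : Set V × Set V × Set V |
      IsSeparation G p.1 p.2.1 p.2.2 ∧ p.2.1.ncard < k ∧ X ⊆ p.2.1 ∪ p.2.2} :=
  ⟨fun _ hp => ⟨hp.1, hp.2.1⟩, fun _ _ _ => mem_tangleOf_or_swap_mem hins,
    fun _ h₁ _ h₂ _ h₃ => tangleOf_triple_condition hins hcard h₁ h₂ h₃,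
    fun _ => nonempty_of_mem_tangleOf hins⟩

/-- a (k−1)-inseparable set X with 2|X| > 3(k−1) induces the tangle
𝒯ᵏ(X) of order k. -/
theorem statement4 {V : Type*} [Fintype V] (G : SimpleGraph V) (k : ℕ) (hk : 1 ≤ k)
    (X : Set V) (hins : KInseparable G (k - 1) X)
    (hcard : 3 * (k - 1) < 2 * X.ncard) :
    IsTangle G k {p : Set V × Set V × Set V |
      IsSeparation G p.1 p.2.1 p.2.2 ∧ p.2.1.ncard < k ∧ X ⊆ p.2.1 ∪ p.2.2} :=
  statement4_general G k X hins hcard
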